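/- arXiv:2505.07314 — 3 statements merged into one kernel-verified Lean document; each statement's English description precedes it below -/
import Mathlib

section
/- Bound for the essential variation of a pushforward under the evaluation map: let Γ be a Borel subset of 𝒟_E(Ω) and η ∈ ℝ₊·𝒫(𝒟_E(Ω) ∩ {var < ∞}) with ∫_{𝒟_E(Ω)} |Dγ|(I) dη(γ) < ∞ and η(Γ) > 0. Then the curve t ↦ μ_t = (e_t)_#(η ⌞ Γ) satisfies essvar(μ) ≤ ∫_Γ var(γ) dη(γ). -/
open MeasureTheory Filter Topology Set
open scoped ENNReal NNReal RealInnerProductSpace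

noncomputable section

/-- The unit time interval `[0,1] ⊆ ℝ`. -/
def unitI : Set ℝ := Set.Icc 0 1

/-- Lebesgue measure restricted to the unit interval. -/
def lebI : Measure ℝ := volume.restrict unitI

/-- The (pointwise) variation of a curve `f : ℝ → X` on a set `s ⊆ ℝ`,
with respect to a distance function `d`. -/
def varOn {X : Type*} (d : X → X → ℝ≥0∞) (f : ℝ → X) (s : Set ℝ) : ℝ≥0∞ :=
  ⨆ p : ℕ × { u : ℕ → ℝ // Monotone u ∧ ∀ i, u i ∈ s },
    ∑ i ∈ Finset.range p.1, d (f (p.2.1 (i + 1))) (f (p.2.1 i))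

/-- The essential variation of `f` on `s`: infimum of variations over a.e. representatives. -/
def essVarOn {X : Type*} (d : X → X → ℝ≥0∞) (f : ℝ → X) (s : Set ℝ) : ℝ≥0∞ :=
  ⨅ g ∈ {g : ℝ → X | ∀ᵐ t ∂(volume.restrict s), g t = f t}, varOn d g s

/-- Essential variation on the unit interval. -/
def essVar {X : Type*} (d : X → X → ℝ≥0∞) (f : ℝ → X) : ℝ≥0∞ := essVarOn d f unitI

/-- Couplings (transport plans) between two measures. -/
def IsCoupling {X : Type*} [MeasurableSpace X] (ρp ρm : Measure X)
    (π : Measure (X × X)) : Prop :=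
  π.map Prod.fst = ρp ∧ π.map Prod.snd = ρm

/-- The Wasserstein-1 distance between measures. -/
def W1 {X : Type*} [MeasurableSpace X] [PseudoEMetricSpace X]
    (ρp ρm : Measure X) : ℝ≥0∞ :=
  ⨅ π ∈ {π : Measure (X × X) | IsCoupling ρp ρm π}, ∫⁻ q, edist q.1 q.2 ∂π

/-- `W1` as a distance function on measures. -/
def W1M {X : Type*} [MeasurableSpace X] [PseudoEMetricSpace X] :
    Measure X → Measure X → ℝ≥0∞ := fun a b => W1 a b

/-- Wasserstein-1 distance on probability measures. -/
def W1P {X : Type*} [MeasurableSpace X] [PseudoEMetricSpace X] :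
    ProbabilityMeasure X → ProbabilityMeasure X → ℝ≥0∞ :=
  fun a b => W1 (a : Measure X) (b : Measure X)

/-- The admissible set `𝒜 = ℝ₊ ⬝ BV(I; 𝒲₁(Ω))` of weighted BV curves of probability measures. -/
def Adm {n : ℕ} (Ω : Set (EuclideanSpace ℝ (Fin n))) : Set (ℝ → Measure ↥Ω) :=
  {μ | ∃ (c : ℝ≥0) (ρ : ℝ → ProbabilityMeasure ↥Ω),
      essVar W1P ρ < ⊤ ∧ ∀ t, μ t = (c : ℝ≥0∞) • (ρ t : Measure ↥Ω)}

/-- The weight `ω(μ)` of an admissible curve. -/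
def wt {n : ℕ} {Ω : Set (EuclideanSpace ℝ (Fin n))} (μ : ℝ → Measure ↥Ω) : ℝ :=
  (μ 0 Set.univ).toReal

/-- The regularizer `𝓡_{α,β}(μ) = α ω(μ) + β essvar(μ)`. -/
def Reg {n : ℕ} {Ω : Set (EuclideanSpace ℝ (Fin n))} (α β : ℝ)
    (μ : ℝ → Measure ↥Ω) : ℝ :=
  α * wt μ + β * (essVar W1M μ).toReal

/-- Weak-* convergence of a sequence of measures (tested against continuous functions). -/
def WStarTendsto {X : Type*} [MeasurableSpace X] [TopologicalSpace X]
    (μs : ℕ → Measure X) (μ : Measure X) : Prop :=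
  ∀ φ : C(X, ℝ), Tendsto (fun j => ∫ x, φ x ∂(μs j)) atTop (𝓝 (∫ x, φ x ∂μ))

/-- A.e. (in time) weak-* convergence of curves of measures. -/
def AEWStar {n : ℕ} {Ω : Set (EuclideanSpace ℝ (Fin n))}
    (μs : ℕ → (ℝ → Measure ↥Ω)) (μ : ℝ → Measure ↥Ω) : Prop :=
  ∀ᵐ t ∂lebI, WStarTendsto (fun j => μs j t) (μ t)

/-- Weak convergence in a real inner product space. -/
def WeakTendsto {Y : Type*} [NormedAddCommGroup Y] [InnerProductSpace ℝ Y]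
    (ys : ℕ → Y) (y : Y) : Prop :=
  ∀ z : Y, Tendsto (fun j => @inner ℝ Y _ (ys j) z) atTop (𝓝 (@inner ℝ Y _ y z))


/-- A curve is càdlàg (w.r.t. a distance function `d`) on `[0,1]`: right-continuous at every
`t ∈ [0,1)` and with existing left limits at every `t ∈ (0,1]`. -/
def Cadlag {X : Type*} (d : X → X → ℝ≥0∞) (f : ℝ → X) : Prop :=
  (∀ t ∈ Set.Ico (0 : ℝ) 1, Tendsto (fun s => d (f s) (f t)) (𝓝[>] t) (𝓝 0)) ∧
  (∀ t ∈ Set.Ioc (0 : ℝ) 1, ∃ L : X, Tendsto (fun s => d (f s) L) (𝓝[<] t) (𝓝 0))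

/-- The Euclidean (extended) distance on `Ω`. -/
def edistE {n : ℕ} {Ω : Set (EuclideanSpace ℝ (Fin n))} : ↥Ω → ↥Ω → ℝ≥0∞ :=
  fun a b => edist a b

/-- Bound for the essential variation of a pushforward under the evaluation
map: if `Γ` is a Borel set of càdlàg curves, `η` a nonnegative finite measure concentrated on
càdlàg curves of finite variation with `∫ |Dγ|(I) dη < ∞` and `η(Γ) > 0`, then the curve
`t ↦ (e_t)₊(η ⌞ Γ)` satisfies `essvar(μ) ≤ ∫_Γ var(γ) dη(γ)` (w.r.t. `W₁`). -/
theorem essvar_pushforward_evaluation_le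
    {n : ℕ} (Ω : Set (EuclideanSpace ℝ (Fin n)))
    (hΩne : Ω.Nonempty) (hΩcp : IsCompact Ω) (hΩcv : Convex ℝ Ω)
    (η : Measure (ℝ → ↥Ω)) [IsFiniteMeasure η]
    (hηconc : η {γ : ℝ → ↥Ω | ¬ (Cadlag edistE γ ∧ varOn edistE γ unitI < ⊤)} = 0)
    (hηD : ∫⁻ γ : ℝ → ↥Ω, essVarOn edistE γ (Set.Ioo 0 1) ∂η < ⊤)
    (Γ : Set (ℝ → ↥Ω)) (hΓmeas : MeasurableSet Γ)
    (hΓcadlag : Γ ⊆ {γ : ℝ → ↥Ω | Cadlag edistE γ})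
    (hΓpos : 0 < η Γ) :
    essVar W1M (fun t => Measure.map (fun γ : ℝ → ↥Ω => γ t) (η.restrict Γ)) ≤
      ∫⁻ γ : ℝ → ↥Ω, varOn edistE γ unitI ∂(η.restrict Γ) := by
  set ν := η.restrict Γ with hν
  set μ := fun t => Measure.map (fun γ : ℝ → ↥Ω => γ t) ν with hμ
  -- Each Wasserstein increment is bounded by the integral of pointwise distances.
  have key : ∀ a b : ℝ, W1M (μ a) (μ b) ≤ ∫⁻ γ : ℝ → ↥Ω, edist (γ a) (γ b) ∂ν := by
    intro a b
    have hma : Measurable (fun γ : ℝ → ↥Ω => γ a) := measurable_pi_apply a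
    have hmb : Measurable (fun γ : ℝ → ↥Ω => γ b) := measurable_pi_apply b
    have hm : Measurable (fun γ : ℝ → ↥Ω => (γ a, γ b)) := hma.prodMk hmb
    have hc : IsCoupling (μ a) (μ b) (ν.map (fun γ : ℝ → ↥Ω => (γ a, γ b))) := by
      constructor
      · rw [Measure.map_map measurable_fst hm]; rfl
      · rw [Measure.map_map measurable_snd hm]; rfl
    have h1 : W1M (μ a) (μ b) ≤
        ∫⁻ q, edist q.1 q.2 ∂(ν.map (fun γ : ℝ → ↥Ω => (γ a, γ b))) :=
      iInf₂_le _ hc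
    rwa [lintegral_map (measurable_fst.edist measurable_snd) hm] at h1
  -- essVar is bounded by the variation of the curve itself.
  have h0 : essVar W1M μ ≤ varOn W1M μ unitI := by
    refine iInf₂_le μ ?_
    show ∀ᵐ (t : ℝ) ∂volume.restrict unitI, μ t = μ t
    exact Filter.Eventually.of_forall fun t => rfl
  refine h0.trans ?_
  refine iSup_le fun p => ?_
  obtain ⟨N, u, hu, hus⟩ := p
  calc ∑ i ∈ Finset.range N, W1M (μ (u (i + 1))) (μ (u i))
      ≤ ∑ i ∈ Finset.range N, ∫⁻ γ : ℝ → ↥Ω, edist (γ (u (i + 1))) (γ (u i)) ∂ν :=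
        Finset.sum_le_sum fun i _ => key _ _
    _ = ∫⁻ γ : ℝ → ↥Ω, ∑ i ∈ Finset.range N, edist (γ (u (i + 1))) (γ (u i)) ∂ν := by
        rw [lintegral_finset_sum]
        exact fun i _ => (measurable_pi_apply _).edist (measurable_pi_apply _)
    _ ≤ ∫⁻ γ : ℝ → ↥Ω, varOn edistE γ unitI ∂ν := by
        refine lintegral_mono fun γ => ?_
        exact le_iSup (fun p : ℕ × { u : ℕ → ℝ // Monotone u ∧ ∀ i, u i ∈ unitI } =>
          ∑ i ∈ Finset.range p.1, edistE (γ (p.2.1 (i + 1))) (γ (p.2.1 i)))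
          (N, ⟨u, hu, hus⟩)

end
end

section
/- Action of nascent (θ,t)-delta functions on scalar BV functions: let ψ ∈ BV(I;ℝ), let t ∈ I, θ ∈ [0,1], and let (φ^δ)_{δ>0} ⊂ C(I;ℝ₊) be a family of nascent (θ,t)-delta functions. Then lim_{δ→0} ∫_{[0,t]} φ^δ ψ dℒ = θ ψ̄_t^− and lim_{δ→0} ∫_{[t,1]} φ^δ ψ dℒ = (1−θ) ψ̄_t, where ψ̄ is any càdlàg representative of ψ and ψ̄_t^− its left limit at t. -/
open MeasureTheory Filter Topology Set
open scoped ENNReal NNReal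

noncomputable section

/-- A family `(φ^δ)_{δ>0}` of nascent `(θ,t)`-delta functions: nonnegative continuous
functions on `I`, vanishing outside `[t−δ, t+δ]`, with `θ^δ = ∫_{[0,t]} φ^δ ∈ [0,1]`,
`∫_{[t,1]} φ^δ = 1 − θ^δ`, and `θ^δ → θ` as `δ → 0`. -/
def NascentDelta (θ t : ℝ) (φ : ℝ → ℝ → ℝ) : Prop :=
  (∀ δ : ℝ, 0 < δ → ContinuousOn (φ δ) unitI ∧ ∀ s ∈ unitI, 0 ≤ φ δ s) ∧
  (∀ δ : ℝ, 0 < δ → ∀ s ∈ unitI \ Set.Icc (t - δ) (t + δ), φ δ s = 0) ∧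
  (∀ δ : ℝ, 0 < δ → (∫ s in Set.Icc (0 : ℝ) t, φ δ s) ∈ Set.Icc (0 : ℝ) 1 ∧
    (∫ s in Set.Icc t 1, φ δ s) = 1 - ∫ s in Set.Icc (0 : ℝ) t, φ δ s) ∧
  Tendsto (fun δ => ∫ s in Set.Icc (0 : ℝ) t, φ δ s) (𝓝[>] (0 : ℝ)) (𝓝 θ)


lemma aemeas_of_rightCont (f : ℝ → ℝ)
    (hf : ∀ u ∈ Set.Ico (0:ℝ) 1, Tendsto f (𝓝[>] u) (𝓝 (f u))) :
    AEMeasurable f lebI := by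
  set h : ℕ → ℝ → ℝ := fun n s => f ((⌊s * 2^n⌋ + 1 : ℤ) / 2^n) with hh
  have hmeas : ∀ n, AEMeasurable (h n) lebI := by
    intro n
    have : Measurable (h n) := by
      have h1 : Measurable fun s : ℝ => (⌊s * 2^n⌋ : ℤ) :=
        Int.measurable_floor.comp (measurable_id.mul_const _)
      exact (measurable_from_top (f := fun k : ℤ => f ((k + 1 : ℤ) / 2^n))).comp h1
    exact this.aemeasurable
  apply aemeasurable_of_tendsto_metrizable_ae atTop hmeas
  have h1 : ∀ᵐ s ∂lebI, s ∈ Set.Icc (0:ℝ) 1 := ae_restrict_mem measurableSet_Icc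
  have h2 : ∀ᵐ s ∂lebI, s ≠ 1 := by
    have h0 : lebI {(1:ℝ)} = 0 := by
      rw [lebI, Measure.restrict_apply (measurableSet_singleton _)]
      exact measure_mono_null Set.inter_subset_left (by simp)
    exact ae_iff.2 (by simpa using h0)
  filter_upwards [h1, h2] with s hs hs1
  have hs' : s ∈ Set.Ico (0:ℝ) 1 := ⟨hs.1, lt_of_le_of_ne hs.2 hs1⟩
  refine (hf s hs').comp ?_
  rw [tendsto_nhdsWithin_iff]
  constructor
  · have hA : Tendsto (fun n : ℕ => s + (2:ℝ)⁻¹ ^ n) atTop (𝓝 (s + 0)) :=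
      tendsto_const_nhds.add (tendsto_pow_atTop_nhds_zero_of_lt_one (by norm_num) (by norm_num))
    rw [add_zero] at hA
    apply tendsto_of_tendsto_of_tendsto_of_le_of_le tendsto_const_nhds hA
    · intro n
      have h2n : (0:ℝ) < 2^n := by positivity
      simp only [ge_iff_le, le_div_iff₀ h2n]
      push_cast
      nlinarith [Int.lt_floor_add_one (s * 2^n)]
    · intro n
      have h2n : (0:ℝ) < 2^n := by positivity
      simp only [div_le_iff₀ h2n]
      have h1 : (2:ℝ)⁻¹ ^ n * 2 ^ n = 1 := by
        rw [← mul_pow]; norm_num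
      push_cast
      nlinarith [Int.floor_le (s * 2^n)]
  · apply Filter.Eventually.of_forall
    intro n
    have h2n : (0:ℝ) < 2^n := by positivity
    simp only [Set.mem_Ioi]
    rw [lt_div_iff₀ h2n]
    push_cast
    nlinarith [Int.floor_le (s * 2^n), Int.lt_floor_add_one (s * 2^n)]


lemma bounded_of_essVar (ψ : ℝ → ℝ)
    (hψ : essVar (fun a b : ℝ => edist a b) ψ < ⊤) :
    ∃ C : ℝ, 0 ≤ C ∧ ∀ᵐ s ∂lebI, |ψ s| ≤ C := by
  rw [essVar, essVarOn] at hψ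
  simp only [iInf_lt_iff, Set.mem_setOf_eq] at hψ
  obtain ⟨g, hg, hVg⟩ := hψ
  set V := varOn (fun a b : ℝ => edist a b) g unitI with hV
  have key : ∀ a ∈ unitI, edist (g a) (g 0) ≤ V := by
    intro a ha
    have h0 : (0:ℝ) ∈ unitI := by simp [unitI]
    have ha0 : (0:ℝ) ≤ a := ha.1
    set u : ℕ → ℝ := fun i => if i = 0 then 0 else a with hu
    have hmono : Monotone u := by
      intro i j hij
      by_cases hi : i = 0
      · simp only [hu, hi, if_pos rfl]
        by_cases hj : j = 0 <;> simp [hj, ha0]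
      · have hj : j ≠ 0 := by omega
        simp [hu, hi, hj]
    have hmem : ∀ i, u i ∈ unitI := by
      intro i; by_cases hi : i = 0 <;> simp [hu, hi, h0, ha]
    calc edist (g a) (g 0)
        = ∑ i ∈ Finset.range (1, (⟨u, hmono, hmem⟩ : { u : ℕ → ℝ // Monotone u ∧ ∀ i, u i ∈ unitI })).1,
            edist (g (u (i+1))) (g (u i)) := by simp [hu]
      _ ≤ V := le_iSup (fun p : ℕ × { u : ℕ → ℝ // Monotone u ∧ ∀ i, u i ∈ unitI } =>
            ∑ i ∈ Finset.range p.1, edist (g (p.2.1 (i + 1))) (g (p.2.1 i)))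
            (1, ⟨u, hmono, hmem⟩)
  refine ⟨|g 0| + V.toReal, by positivity, ?_⟩
  have hmem : ∀ᵐ s ∂lebI, s ∈ unitI := ae_restrict_mem (by rw [unitI]; exact measurableSet_Icc)
  filter_upwards [hg, hmem] with s hgs hs
  rw [← hgs]
  have h1 : dist (g s) (g 0) ≤ V.toReal := by
    have := key s hs
    rw [edist_dist] at this
    calc dist (g s) (g 0) = (ENNReal.ofReal (dist (g s) (g 0))).toReal := by
          rw [ENNReal.toReal_ofReal dist_nonneg]
      _ ≤ V.toReal := ENNReal.toReal_mono hVg.ne this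
  calc |g s| ≤ |g 0| + |g s - g 0| := by
        have := abs_sub_abs_le_abs_sub (g s) (g 0); linarith
    _ ≤ |g 0| + V.toReal := by rw [← Real.dist_eq]; linarith


lemma key_diff_tendsto (t a b : ℝ) (hsub : Set.Icc a b ⊆ unitI)
    (φ : ℝ → ℝ → ℝ)
    (hφc : ∀ δ : ℝ, 0 < δ → ContinuousOn (φ δ) unitI)
    (hφ0 : ∀ δ : ℝ, 0 < δ → ∀ s ∈ unitI, 0 ≤ φ δ s)
    (hsupp : ∀ δ : ℝ, 0 < δ → ∀ s ∈ unitI \ Set.Icc (t - δ) (t + δ), φ δ s = 0)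
    (hI1 : ∀ δ : ℝ, 0 < δ → (∫ s in Set.Icc a b, φ δ s) ≤ 1)
    (ψ ψbar : ℝ → ℝ) (hψeq : ∀ᵐ s ∂lebI, ψbar s = ψ s)
    (hψm : AEMeasurable ψ lebI) (C : ℝ) (hC : 0 ≤ C) (hbd : ∀ᵐ s ∂lebI, |ψ s| ≤ C)
    (L : ℝ)
    (hclose : ∀ ε : ℝ, 0 < ε → ∃ δ1 : ℝ, 0 < δ1 ∧
      ∀ s ∈ Set.Icc a b, s ≠ t → |s - t| < δ1 → |ψbar s - L| < ε) :
    Tendsto (fun δ => (∫ s in Set.Icc a b, φ δ s * ψ s) - (∫ s in Set.Icc a b, φ δ s) * L)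
      (𝓝[>] (0:ℝ)) (𝓝 0) := by
  rw [NormedAddCommGroup.tendsto_nhds_zero]
  intro ε hε
  obtain ⟨δ1, hδ1, hδ1close⟩ := hclose (ε/2) (by linarith)
  have hIoo : Set.Ioo (0:ℝ) δ1 ∈ 𝓝[>] (0:ℝ) := Ioo_mem_nhdsGT_of_mem ⟨le_refl 0, hδ1⟩
  filter_upwards [hIoo] with δ hδ
  have hδ0 : 0 < δ := hδ.1
  set μ := volume.restrict (Set.Icc a b) with hμ
  have hle : μ ≤ lebI := Measure.restrict_mono hsub le_rfl
  have haem : ∀ {p : ℝ → Prop}, (∀ᵐ s ∂lebI, p s) → (∀ᵐ s ∂μ, p s) :=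
    fun h => h.filter_mono (ae_mono hle)
  have hφcab : ContinuousOn (φ δ) (Set.Icc a b) := (hφc δ hδ0).mono hsub
  have Iφ : IntegrableOn (φ δ) (Set.Icc a b) := hφcab.integrableOn_Icc
  have hmeasφ : AEMeasurable (φ δ) μ := hφcab.aemeasurable measurableSet_Icc
  have hmeasψ : AEMeasurable ψ μ := hψm.mono_measure hle
  have hmeasprod : AEStronglyMeasurable (fun s => φ δ s * ψ s) μ :=
    (hmeasφ.mul hmeasψ).aestronglyMeasurable
  have hmemab : ∀ᵐ s ∂μ, s ∈ Set.Icc a b := ae_restrict_mem measurableSet_Icc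
  have hbd' : ∀ᵐ s ∂μ, ‖φ δ s * ψ s‖ ≤ C * φ δ s := by
    filter_upwards [haem hbd, hmemab] with s hs hsab
    have h0 : 0 ≤ φ δ s := hφ0 δ hδ0 s (hsub hsab)
    rw [norm_mul, Real.norm_eq_abs, Real.norm_eq_abs, abs_of_nonneg h0]
    calc φ δ s * |ψ s| ≤ φ δ s * C := by nlinarith
      _ = C * φ δ s := mul_comm _ _
  have Iφψ : IntegrableOn (fun s => φ δ s * ψ s) (Set.Icc a b) :=
    Integrable.mono' (Iφ.const_mul C) hmeasprod hbd'
  have hnet : ∀ᵐ s ∂μ, s ≠ t := by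
    have h0 : μ {(t:ℝ)} = 0 := by
      rw [hμ, Measure.restrict_apply (measurableSet_singleton _)]
      exact measure_mono_null Set.inter_subset_left (by simp)
    exact ae_iff.2 (by simpa using h0)
  have hkey : ∀ᵐ s ∂μ, ‖φ δ s * ψ s - φ δ s * L‖ ≤ (ε/2) * φ δ s := by
    filter_upwards [haem hψeq, hmemab, hnet] with s hseq hsab hsne
    have h0 : 0 ≤ φ δ s := hφ0 δ hδ0 s (hsub hsab)
    by_cases hz : φ δ s = 0
    · simp [hz]
    · have hsI : s ∈ Set.Icc (t - δ) (t + δ) := by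
        by_contra hns
        exact hz (hsupp δ hδ0 s ⟨hsub hsab, hns⟩)
      have hst : |s - t| < δ1 := by
        rw [abs_sub_lt_iff]
        constructor <;> [linarith [hsI.2, hδ.2]; linarith [hsI.1, hδ.2]]
      have hcl : |ψbar s - L| < ε/2 := hδ1close s hsab hsne hst
      rw [← mul_sub, norm_mul, Real.norm_eq_abs, Real.norm_eq_abs, abs_of_nonneg h0,
        ← hseq]
      nlinarith [abs_nonneg (ψbar s - L)]
  have heq : (∫ s in Set.Icc a b, φ δ s * ψ s) - (∫ s in Set.Icc a b, φ δ s) * L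
      = ∫ s in Set.Icc a b, (φ δ s * ψ s - φ δ s * L) := by
    rw [integral_sub Iφψ (Iφ.mul_const L), integral_mul_const]
  rw [heq]
  calc ‖∫ s in Set.Icc a b, (φ δ s * ψ s - φ δ s * L)‖
      ≤ ∫ s in Set.Icc a b, ‖φ δ s * ψ s - φ δ s * L‖ := norm_integral_le_integral_norm _
    _ ≤ ∫ s in Set.Icc a b, (ε/2) * φ δ s :=
        integral_mono_ae (Iφψ.sub (Iφ.mul_const L)).norm (Iφ.const_mul (ε/2)) hkey
    _ = (ε/2) * ∫ s in Set.Icc a b, φ δ s := integral_const_mul _ _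
    _ ≤ (ε/2) * 1 := by
        have := hI1 δ hδ0
        nlinarith
    _ < ε := by linarith

/-- Action of nascent `(θ,t)`-delta functions on scalar BV functions:
for `ψ ∈ BV(I;ℝ)` with càdlàg representative `ψ̄`,
`∫_{[0,t]} φ^δ ψ → θ ψ̄_t⁻` and `∫_{[t,1]} φ^δ ψ → (1−θ) ψ̄_t` as `δ → 0`. -/
theorem nascent_delta_on_BV
    (θ t : ℝ) (ht : t ∈ unitI) (hθ : θ ∈ Set.Icc (0 : ℝ) 1)
    (φ : ℝ → ℝ → ℝ) (hφ : NascentDelta θ t φ)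
    (ψ : ℝ → ℝ) (hψ : essVar (fun a b : ℝ => edist a b) ψ < ⊤) :
    ∀ ψbar : ℝ → ℝ, (∀ᵐ s ∂lebI, ψbar s = ψ s) →
      Cadlag (fun a b : ℝ => edist a b) ψbar →
      (∀ L : ℝ, Tendsto ψbar (𝓝[<] t) (𝓝 L) →
        Tendsto (fun δ => ∫ s in Set.Icc (0 : ℝ) t, φ δ s * ψ s) (𝓝[>] (0 : ℝ))
          (𝓝 (θ * L))) ∧
      Tendsto (fun δ => ∫ s in Set.Icc t 1, φ δ s * ψ s) (𝓝[>] (0 : ℝ))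
        (𝓝 ((1 - θ) * ψbar t)) := by
  intro ψbar hae hcad
  obtain ⟨hcn, hsupp, hint, hθδ⟩ := hφ
  have hφc : ∀ δ : ℝ, 0 < δ → ContinuousOn (φ δ) unitI := fun δ hδ => (hcn δ hδ).1
  have hφ0 : ∀ δ : ℝ, 0 < δ → ∀ s ∈ unitI, 0 ≤ φ δ s := fun δ hδ => (hcn δ hδ).2
  have hrc : ∀ u ∈ Set.Ico (0:ℝ) 1, Tendsto ψbar (𝓝[>] u) (𝓝 (ψbar u)) := by
    intro u hu
    rw [EMetric.tendsto_nhds]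
    intro ε hε
    exact (hcad.1 u hu).eventually_lt_const hε
  have hψbm : AEMeasurable ψbar lebI := aemeas_of_rightCont ψbar hrc
  have hψm : AEMeasurable ψ lebI := hψbm.congr hae
  obtain ⟨C, hC, hbd⟩ := bounded_of_essVar ψ hψ
  constructor
  · intro L hL
    have hsub : Set.Icc (0:ℝ) t ⊆ unitI := Set.Icc_subset_Icc le_rfl ht.2
    have hclose : ∀ ε : ℝ, 0 < ε → ∃ δ1 : ℝ, 0 < δ1 ∧
        ∀ s ∈ Set.Icc (0:ℝ) t, s ≠ t → |s - t| < δ1 → |ψbar s - L| < ε := by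
      intro ε hε
      obtain ⟨δ1, hδ1, hδ1c⟩ := Metric.tendsto_nhdsWithin_nhds.1 hL ε hε
      refine ⟨δ1, hδ1, fun s hs hsne hst => ?_⟩
      have : s ∈ Set.Iio t := lt_of_le_of_ne hs.2 hsne
      have := hδ1c this (by rwa [Real.dist_eq])
      rwa [Real.dist_eq] at this
    have key := key_diff_tendsto t 0 t hsub φ hφc hφ0 hsupp
      (fun δ hδ => ((hint δ hδ).1).2) ψ ψbar hae hψm C hC hbd L hclose
    have h2 : Tendsto (fun δ => (∫ s in Set.Icc (0:ℝ) t, φ δ s) * L)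
        (𝓝[>] (0:ℝ)) (𝓝 (θ * L)) := hθδ.mul_const L
    have := key.add h2
    simpa using this
  · by_cases htlt : t < 1
    · have hsub : Set.Icc t 1 ⊆ unitI := Set.Icc_subset_Icc ht.1 le_rfl
      have hrt : Tendsto ψbar (𝓝[>] t) (𝓝 (ψbar t)) := hrc t ⟨ht.1, htlt⟩
      have hclose : ∀ ε : ℝ, 0 < ε → ∃ δ1 : ℝ, 0 < δ1 ∧
          ∀ s ∈ Set.Icc t 1, s ≠ t → |s - t| < δ1 → |ψbar s - ψbar t| < ε := by
        intro ε hε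
        obtain ⟨δ1, hδ1, hδ1c⟩ := Metric.tendsto_nhdsWithin_nhds.1 hrt ε hε
        refine ⟨δ1, hδ1, fun s hs hsne hst => ?_⟩
        have : s ∈ Set.Ioi t := lt_of_le_of_ne hs.1 (Ne.symm hsne)
        have := hδ1c this (by rwa [Real.dist_eq])
        rwa [Real.dist_eq] at this
      have hI1 : ∀ δ : ℝ, 0 < δ → (∫ s in Set.Icc t 1, φ δ s) ≤ 1 := by
        intro δ hδ
        rw [(hint δ hδ).2]
        linarith [((hint δ hδ).1).1]
      have key := key_diff_tendsto t t 1 hsub φ hφc hφ0 hsupp hI1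
        ψ ψbar hae hψm C hC hbd (ψbar t) hclose
      have h2 : Tendsto (fun δ => (∫ s in Set.Icc t 1, φ δ s) * ψbar t)
          (𝓝[>] (0:ℝ)) (𝓝 ((1 - θ) * ψbar t)) := by
        refine Tendsto.mul_const _ ?_
        refine Tendsto.congr' ?_ (tendsto_const_nhds.sub hθδ)
        filter_upwards [self_mem_nhdsWithin] with δ hδ
        exact ((hint δ hδ).2).symm
      have := key.add h2
      simpa using this
    · have ht1 : t = 1 := le_antisymm ht.2 (not_lt.1 htlt)
      subst ht1
      have hzero : (volume : Measure ℝ).restrict (Set.Icc (1:ℝ) 1) = 0 := by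
        rw [Measure.restrict_eq_zero]
        simp
      have hθ1 : θ = 1 := by
        have hconst : Tendsto (fun δ : ℝ => ∫ s in Set.Icc (0:ℝ) 1, φ δ s)
            (𝓝[>] (0:ℝ)) (𝓝 1) := by
          refine Tendsto.congr' ?_ (tendsto_const_nhds (x := (1:ℝ)))
          filter_upwards [self_mem_nhdsWithin] with δ hδ
          have h2 := (hint δ hδ).2
          rw [hzero, integral_zero_measure] at h2
          linarith
        exact tendsto_nhds_unique hθδ hconst
      have hfun : (fun δ : ℝ => ∫ s in Set.Icc (1:ℝ) 1, φ δ s * ψ s) = fun _ => (0:ℝ) :=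
        funext fun δ => by rw [hzero, integral_zero_measure]
      rw [hfun, hθ1]
      simpa using (tendsto_const_nhds : Tendsto (fun _ : ℝ => (0:ℝ)) (𝓝[>] 0) (𝓝 0))

end
end

section
/- Vanishing temporal blur: let μ ∈ 𝒜, let (φ^δ)_{δ>0} be a family of nascent (θ,t)-delta functions, and let Φ : Ω → ℝ be Lipschitz. Then lim_{δ→0} ∫_{[0,t]} φ^δ(s) ∫_Ω Φ(x) dμ_s(x) dℒ(s) = θ ∫_Ω Φ dμ̄_t^− and lim_{δ→0} ∫_{[t,1]} φ^δ(s) ∫_Ω Φ(x) dμ_s(x) dℒ(s) = (1−θ) ∫_Ω Φ dμ̄_t, where μ̄ is any càdlàg representative of μ and μ̄_t^− its left limit (in W₁) at t. -/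
open MeasureTheory Filter Topology Set
open scoped ENNReal NNReal RealInnerProductSpace

noncomputable section

section Aux

variable {X : Type*} [MeasurableSpace X]

lemma IsCoupling.univ_fst {ν1 ν2 : Measure X} {π : Measure (X × X)}
    (h : IsCoupling ν1 ν2 π) : π Set.univ = ν1 Set.univ := by
  rw [← h.1, Measure.map_apply measurable_fst MeasurableSet.univ, Set.preimage_univ]

lemma W1_exists_coupling [PseudoEMetricSpace X] {ν1 ν2 : Measure X} {a : ℝ≥0∞}
    (h : W1 ν1 ν2 < a) :
    ∃ π : Measure (X × X), IsCoupling ν1 ν2 π ∧ ∫⁻ q, edist q.1 q.2 ∂π < a := by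
  rw [W1] at h
  simp only [iInf_lt_iff, Set.mem_setOf_eq, exists_prop] at h
  exact h

lemma coupling_abs_sub_le [MetricSpace X] [OpensMeasurableSpace X]
    [SecondCountableTopology X]
    {Φ : X → ℝ} {M : ℝ} (hM : ∀ x, |Φ x| ≤ M) {C : ℝ≥0} (hLip : LipschitzWith C Φ)
    {ν1 ν2 : Measure X} {π : Measure (X × X)} (hc : IsCoupling ν1 ν2 π)
    (hfin : π Set.univ ≠ ⊤) {ε : ℝ} (hε : 0 ≤ ε)
    (hcost : ∫⁻ q, edist q.1 q.2 ∂π ≤ ENNReal.ofReal ε) :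
    |(∫ x, Φ x ∂ν1) - ∫ x, Φ x ∂ν2| ≤ C * ε := by
  haveI : IsFiniteMeasure π := ⟨lt_top_iff_ne_top.mpr hfin⟩
  have hΦc : Continuous Φ := hLip.continuous
  have h1 : ∫ x, Φ x ∂ν1 = ∫ q : X × X, Φ q.1 ∂π := by
    rw [← hc.1, integral_map measurable_fst.aemeasurable hΦc.aestronglyMeasurable]
  have h2 : ∫ x, Φ x ∂ν2 = ∫ q : X × X, Φ q.2 ∂π := by
    rw [← hc.2, integral_map measurable_snd.aemeasurable hΦc.aestronglyMeasurable]
  have int1 : Integrable (fun q : X × X => Φ q.1) π := by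
    refine Integrable.mono' (integrable_const M)
      ((hΦc.comp continuous_fst).aestronglyMeasurable) ?_
    exact Filter.Eventually.of_forall fun q => (Real.norm_eq_abs _) ▸ hM q.1
  have int2 : Integrable (fun q : X × X => Φ q.2) π := by
    refine Integrable.mono' (integrable_const M)
      ((hΦc.comp continuous_snd).aestronglyMeasurable) ?_
    exact Filter.Eventually.of_forall fun q => (Real.norm_eq_abs _) ▸ hM q.2
  have intd : Integrable (fun q : X × X => dist q.1 q.2) π := by
    refine ⟨continuous_dist.aestronglyMeasurable, ?_⟩
    rw [hasFiniteIntegral_iff_norm]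
    have heq : ∫⁻ q : X × X, ENNReal.ofReal ‖dist q.1 q.2‖ ∂π = ∫⁻ q, edist q.1 q.2 ∂π :=
      lintegral_congr fun q => by
        rw [Real.norm_eq_abs, abs_of_nonneg dist_nonneg, ← edist_dist]
    rw [heq]
    exact lt_of_le_of_lt hcost ENNReal.ofReal_lt_top
  rw [h1, h2, ← integral_sub int1 int2]
  have hb : ∀ q : X × X, ‖Φ q.1 - Φ q.2‖ ≤ (C : ℝ) * dist q.1 q.2 := fun q => by
    rw [Real.norm_eq_abs, ← Real.dist_eq]
    exact hLip.dist_le_mul q.1 q.2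
  calc |∫ q : X × X, (Φ q.1 - Φ q.2) ∂π|
      ≤ ∫ q : X × X, (C : ℝ) * dist q.1 q.2 ∂π := by
        rw [← Real.norm_eq_abs]
        exact norm_integral_le_of_norm_le (intd.const_mul _) (Filter.Eventually.of_forall hb)
    _ = (C : ℝ) * ∫ q : X × X, dist q.1 q.2 ∂π := integral_const_mul _ _
    _ ≤ (C : ℝ) * ε := by
        refine mul_le_mul_of_nonneg_left ?_ C.coe_nonneg
        have hde : ∫ q : X × X, dist q.1 q.2 ∂π = (∫⁻ q, edist q.1 q.2 ∂π).toReal := by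
          rw [integral_eq_lintegral_of_nonneg_ae
            (Filter.Eventually.of_forall fun q => dist_nonneg)
            continuous_dist.aestronglyMeasurable]
          congr 1
          exact lintegral_congr fun q => (edist_dist _ _).symm
        rw [hde]
        calc (∫⁻ q, edist q.1 q.2 ∂π).toReal
            ≤ (ENNReal.ofReal ε).toReal := ENNReal.toReal_mono ENNReal.ofReal_ne_top hcost
          _ = ε := ENNReal.toReal_ofReal hε

lemma W1_abs_le [MetricSpace X] [OpensMeasurableSpace X] [SecondCountableTopology X]
    {Φ : X → ℝ} {M : ℝ} (hM : ∀ x, |Φ x| ≤ M) {C : ℝ≥0} (hLip : LipschitzWith C Φ)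
    {ν1 ν2 : Measure X} (hν1 : ν1 Set.univ ≠ ⊤) {ε : ℝ} (hε : 0 ≤ ε)
    (hW : W1 ν1 ν2 < ENNReal.ofReal ε) :
    |(∫ x, Φ x ∂ν1) - ∫ x, Φ x ∂ν2| ≤ C * ε := by
  obtain ⟨π, hπ, hcost⟩ := W1_exists_coupling hW
  exact coupling_abs_sub_le hM hLip hπ (by rw [hπ.univ_fst]; exact hν1) hε hcost.le

lemma W1_abs_le_toReal [MetricSpace X] [OpensMeasurableSpace X] [SecondCountableTopology X]
    {Φ : X → ℝ} {M : ℝ} (hM : ∀ x, |Φ x| ≤ M) {C : ℝ≥0} (hLip : LipschitzWith C Φ)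
    {ν1 ν2 : Measure X} (hν1 : ν1 Set.univ ≠ ⊤) (hW : W1 ν1 ν2 ≠ ⊤) :
    |(∫ x, Φ x ∂ν1) - ∫ x, Φ x ∂ν2| ≤ C * (W1 ν1 ν2).toReal := by
  by_contra hcon
  push_neg at hcon
  have hC1 : (0 : ℝ) < (C : ℝ) + 1 := by positivity
  set η : ℝ := (|(∫ x, Φ x ∂ν1) - ∫ x, Φ x ∂ν2| - (C : ℝ) * (W1 ν1 ν2).toReal) / ((C : ℝ) + 1)
    with hηdef
  have hηpos : 0 < η := by
    rw [hηdef]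
    exact div_pos (by linarith) hC1
  set ε : ℝ := (W1 ν1 ν2).toReal + η with hεdef
  have hε : 0 ≤ ε := by
    rw [hεdef]
    have := ENNReal.toReal_nonneg (a := W1 ν1 ν2)
    linarith
  have hlt : W1 ν1 ν2 < ENNReal.ofReal ε := by
    rw [hεdef, ENNReal.ofReal_add ENNReal.toReal_nonneg hηpos.le, ENNReal.ofReal_toReal hW]
    exact ENNReal.lt_add_right hW (ne_of_gt (ENNReal.ofReal_pos.mpr hηpos))
  have hb := W1_abs_le hM hLip hν1 hε hlt
  rw [hεdef, mul_add] at hb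
  have hCη : (C : ℝ) * η ≤ ((C : ℝ) + 1) * η := by nlinarith [C.coe_nonneg, hηpos.le]
  have hfld : ((C : ℝ) + 1) * η = |(∫ x, Φ x ∂ν1) - ∫ x, Φ x ∂ν2| - (C : ℝ) * (W1 ν1 ν2).toReal := by
    rw [hηdef, mul_div_cancel₀ _ (ne_of_gt hC1)]
  linarith

lemma W1_prob_le [MetricSpace X] {D : ℝ} (hD : ∀ x y : X, dist x y ≤ D)
    (ν1 ν2 : Measure X) [IsProbabilityMeasure ν1] [IsProbabilityMeasure ν2] :
    W1 ν1 ν2 ≤ ENNReal.ofReal D := by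
  have hc : IsCoupling ν1 ν2 (ν1.prod ν2) := by
    constructor
    · rw [Measure.map_fst_prod]
      simp [measure_univ]
    · rw [Measure.map_snd_prod]
      simp [measure_univ]
  refine le_trans (iInf₂_le _ hc) ?_
  calc ∫⁻ q : X × X, edist q.1 q.2 ∂(ν1.prod ν2)
      ≤ ∫⁻ _ : X × X, ENNReal.ofReal D ∂(ν1.prod ν2) := by
        refine lintegral_mono fun q => ?_
        rw [edist_dist]
        exact ENNReal.ofReal_le_ofReal (hD _ _)
    _ = ENNReal.ofReal D := by simp [measure_univ]

end Aux

/-- Vanishing temporal blur: for admissible `μ ∈ 𝒜`, a family of nascent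
`(θ,t)`-delta functions `φ^δ`, and Lipschitz `Φ : Ω → ℝ`,
`∫_{[0,t]} φ^δ(s) ∫_Ω Φ dμ_s ds → θ ∫_Ω Φ dμ̄_t⁻` and
`∫_{[t,1]} φ^δ(s) ∫_Ω Φ dμ_s ds → (1−θ) ∫_Ω Φ dμ̄_t` as `δ → 0`, where `μ̄` is any càdlàg
representative of `μ` and `μ̄_t⁻` its left limit in `W₁`. -/
theorem vanishing_temporal_blur
    {n : ℕ} (Ω : Set (EuclideanSpace ℝ (Fin n)))
    (hΩne : Ω.Nonempty) (hΩcp : IsCompact Ω) (hΩcv : Convex ℝ Ω)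
    (μ : ℝ → Measure ↥Ω) (hμ : μ ∈ Adm Ω)
    (θ t : ℝ) (ht : t ∈ unitI) (hθ : θ ∈ Set.Icc (0 : ℝ) 1)
    (φ : ℝ → ℝ → ℝ) (hφ : NascentDelta θ t φ)
    (Φ : ↥Ω → ℝ) (hΦ : ∃ C : ℝ≥0, LipschitzWith C Φ) :
    ∀ μbar : ℝ → Measure ↥Ω, (∀ᵐ s ∂lebI, μbar s = μ s) → Cadlag W1M μbar →
      (∀ L : Measure ↥Ω, Tendsto (fun s => W1 (μbar s) L) (𝓝[<] t) (𝓝 0) →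
        Tendsto (fun δ => ∫ s in Set.Icc (0 : ℝ) t, φ δ s * ∫ x, Φ x ∂(μ s))
          (𝓝[>] (0 : ℝ)) (𝓝 (θ * ∫ x, Φ x ∂L))) ∧
      Tendsto (fun δ => ∫ s in Set.Icc t 1, φ δ s * ∫ x, Φ x ∂(μ s))
        (𝓝[>] (0 : ℝ)) (𝓝 ((1 - θ) * ∫ x, Φ x ∂(μbar t))) := by
  obtain ⟨C, hLip⟩ := hΦ
  obtain ⟨c, ρ, hBV, hμc⟩ := hμ
  obtain ⟨hφc, hφsupp, hφint, hφlim⟩ := hφ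
  intro μbar hae hcad
  haveI : CompactSpace ↥Ω := isCompact_iff_compactSpace.mp hΩcp
  haveI : Nonempty ↥Ω := hΩne.to_subtype
  -- a uniform bound on `Φ`
  obtain ⟨x0, -, hx0⟩ := isCompact_univ.exists_isMaxOn Set.univ_nonempty
    ((continuous_abs.comp hLip.continuous).continuousOn)
  set M : ℝ := |Φ x0| with hMdef
  have hMb : ∀ x : ↥Ω, |Φ x| ≤ M := fun x => hx0 (Set.mem_univ x)
  -- a bound on the diameter of `Ω`
  obtain ⟨D, hD⟩ := Metric.isBounded_iff.mp (isCompact_univ (X := ↥Ω)).isBounded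
  have hDb : ∀ x y : ↥Ω, dist x y ≤ D := fun x y => hD (Set.mem_univ x) (Set.mem_univ y)
  -- extract a BV representative of the curve
  have hBV' : ∃ g : ℝ → ProbabilityMeasure ↥Ω,
      (∀ᵐ s ∂(volume.restrict unitI), g s = ρ s) ∧ varOn W1P g unitI < ⊤ := by
    have h := hBV
    rw [essVar, essVarOn] at h
    simp only [iInf_lt_iff, Set.mem_setOf_eq, exists_prop] at h
    exact h
  obtain ⟨g, hg, hgvar⟩ := hBV'
  set h0 : ℝ → ℝ := fun s => ∫ x, Φ x ∂(g s : Measure ↥Ω) with hh0def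
  have hprobfin : ∀ a b : ℝ, W1P (g a) (g b) ≠ ⊤ := fun a b =>
    ne_top_of_le_ne_top ENNReal.ofReal_ne_top (W1_prob_le hDb _ _)
  have hbound : ∀ s, |h0 s| ≤ M := by
    intro s
    rw [show |h0 s| = ‖∫ x, Φ x ∂(g s : Measure ↥Ω)‖ from (Real.norm_eq_abs _).symm]
    calc ‖∫ x, Φ x ∂(g s : Measure ↥Ω)‖ ≤ M * ((g s : Measure ↥Ω) Set.univ).toReal :=
        norm_integral_le_of_norm_le_const (Filter.Eventually.of_forall fun x =>
          le_trans (le_of_eq (Real.norm_eq_abs _)) (hMb x))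
      _ = M := by simp [measure_univ]
  have hedist : ∀ a b : ℝ, edist (h0 a) (h0 b) ≤ (C : ℝ≥0∞) * W1P (g a) (g b) := by
    intro a b
    have habs : |h0 a - h0 b| ≤ (C : ℝ) * (W1P (g a) (g b)).toReal :=
      W1_abs_le_toReal hMb hLip
        (by rw [measure_univ]; exact ENNReal.one_ne_top) (hprobfin a b)
    calc edist (h0 a) (h0 b) = ENNReal.ofReal (dist (h0 a) (h0 b)) := edist_dist _ _
      _ ≤ ENNReal.ofReal ((C : ℝ) * (W1P (g a) (g b)).toReal) :=
          ENNReal.ofReal_le_ofReal (by rw [Real.dist_eq]; exact habs)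
      _ = (C : ℝ≥0∞) * W1P (g a) (g b) := by
          rw [ENNReal.ofReal_mul C.coe_nonneg, ENNReal.ofReal_coe_nnreal,
            ENNReal.ofReal_toReal (hprobfin a b)]
  have hbv : BoundedVariationOn h0 unitI := by
    have hle : eVariationOn h0 unitI ≤ (C : ℝ≥0∞) * varOn W1P g unitI := by
      refine iSup_le fun p => ?_
      calc ∑ i ∈ Finset.range p.1, edist (h0 (p.2.1 (i + 1))) (h0 (p.2.1 i))
          ≤ ∑ i ∈ Finset.range p.1, (C : ℝ≥0∞) * W1P (g (p.2.1 (i + 1))) (g (p.2.1 i)) :=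
            Finset.sum_le_sum fun i _ => hedist _ _
        _ = (C : ℝ≥0∞) * ∑ i ∈ Finset.range p.1, W1P (g (p.2.1 (i + 1))) (g (p.2.1 i)) :=
            (Finset.mul_sum _ _ _).symm
        _ ≤ (C : ℝ≥0∞) * varOn W1P g unitI := by
            refine mul_le_mul_right ?_ _
            exact le_iSup (fun p : ℕ × { u : ℕ → ℝ // Monotone u ∧ ∀ i, u i ∈ unitI } =>
              ∑ i ∈ Finset.range p.1, W1P (g (p.2.1 (i + 1))) (g (p.2.1 i))) p
    exact ne_top_of_le_ne_top (ENNReal.mul_ne_top ENNReal.coe_ne_top hgvar.ne) hle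
  have hmeas : AEMeasurable h0 (volume.restrict unitI) := by
    obtain ⟨p, q, hp, hq, hpq⟩ :=
      hbv.locallyBoundedVariationOn.exists_monotoneOn_sub_monotoneOn
    rw [hpq]
    have hU : MeasurableSet unitI := measurableSet_Icc
    exact (aemeasurable_restrict_of_monotoneOn hU hp).sub
      (aemeasurable_restrict_of_monotoneOn hU hq)
  have hmass : ∀ s, μ s Set.univ = (c : ℝ≥0∞) := by
    intro s
    rw [hμc s]
    simp [measure_univ]
  have hmassne : ∀ s, μ s Set.univ ≠ ⊤ := fun s => by rw [hmass s]; exact ENNReal.coe_ne_top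
  have hFae : ∀ᵐ s ∂(volume.restrict unitI),
      (∫ x, Φ x ∂(μ s)) = ((c : ℝ≥0∞)).toReal * h0 s := by
    filter_upwards [hg] with s hs
    rw [hμc s, integral_smul_measure, smul_eq_mul]
    simp only [hh0def]
    rw [← hs]
  -- the common quantitative estimate
  have key : ∀ (a b : ℝ) (ν : Measure ↥Ω), Set.Icc a b ⊆ unitI →
      (∀ δ : ℝ, 0 < δ → 0 ≤ (∫ s in Set.Icc a b, φ δ s) ∧ (∫ s in Set.Icc a b, φ δ s) ≤ 1) →
      (∀ ε' : ℝ, 0 < ε' → ∃ δ0, 0 < δ0 ∧ ∀ s, s ∈ Set.Icc a b → s ≠ t → |s - t| < δ0 →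
        W1 (μbar s) ν < ENNReal.ofReal ε') →
      Tendsto (fun δ => (∫ s in Set.Icc a b, φ δ s * ∫ x, Φ x ∂(μ s))
          - (∫ s in Set.Icc a b, φ δ s) * ∫ x, Φ x ∂ν) (𝓝[>] (0 : ℝ)) (𝓝 0) := by
    intro a b ν hsub hint01 hcond
    rw [NormedAddCommGroup.tendsto_nhds_zero]
    intro ε hε
    have hC1 : (0 : ℝ) < (C : ℝ) + 1 := by positivity
    set ε' : ℝ := ε / (2 * ((C : ℝ) + 1)) with hε'def
    have hε'pos : 0 < ε' := by rw [hε'def]; positivity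
    have hCε' : (C : ℝ) * ε' < ε := by
      rw [hε'def, mul_div_assoc', div_lt_iff₀ (by positivity)]
      nlinarith [C.coe_nonneg]
    obtain ⟨δ0, hδ0pos, hδ0⟩ := hcond ε' hε'pos
    filter_upwards [Ioo_mem_nhdsGT_of_mem (Set.left_mem_Ico.mpr hδ0pos)] with δ hδ
    obtain ⟨hδpos, hδlt⟩ := hδ
    have hres : volume.restrict (Set.Icc a b) ≤ volume.restrict unitI :=
      Measure.restrict_mono hsub le_rfl
    have intφδ : IntegrableOn (φ δ) (Set.Icc a b) :=
      ((hφc δ hδpos).1.mono hsub).integrableOn_Icc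
    have hmeas' : AEStronglyMeasurable (fun s => ((c : ℝ≥0∞)).toReal * h0 s)
        (volume.restrict (Set.Icc a b)) :=
      ((hmeas.mono_measure hres).const_mul _).aestronglyMeasurable
    have i1 : IntegrableOn (fun s => ((c : ℝ≥0∞)).toReal * h0 s * φ δ s) (Set.Icc a b) := by
      refine Integrable.bdd_mul (c := ((c : ℝ≥0∞)).toReal * M) intφδ hmeas' (Filter.Eventually.of_forall fun x => ?_)
      rw [norm_mul, Real.norm_eq_abs, Real.norm_eq_abs, abs_of_nonneg ENNReal.toReal_nonneg]
      exact mul_le_mul_of_nonneg_left (hbound x) ENNReal.toReal_nonneg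
    have intF : IntegrableOn (fun s => φ δ s * ∫ x, Φ x ∂(μ s)) (Set.Icc a b) := by
      refine i1.congr ?_
      filter_upwards [hFae.filter_mono (ae_mono hres)] with s hs
      rw [hs, mul_comm]
    have intK : IntegrableOn (fun s => φ δ s * ∫ x, Φ x ∂ν) (Set.Icc a b) :=
      intφδ.mul_const _
    rw [← integral_mul_const, ← integral_sub intF intK]
    have hne_ae : ∀ᵐ s ∂(volume.restrict (Set.Icc a b)), s ≠ t := by
      rw [ae_iff]
      have hset : {s : ℝ | ¬ s ≠ t} = {t} := by ext s; simp
      rw [hset, Measure.restrict_apply (measurableSet_singleton t)]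
      exact measure_mono_null Set.inter_subset_left Real.volume_singleton
    have hb : ∀ᵐ s ∂(volume.restrict (Set.Icc a b)),
        ‖φ δ s * (∫ x, Φ x ∂(μ s)) - φ δ s * ∫ x, Φ x ∂ν‖ ≤ φ δ s * ((C : ℝ) * ε') := by
      filter_upwards [hae.filter_mono (ae_mono hres), ae_restrict_mem measurableSet_Icc,
        hne_ae] with s hμs hmem hsne
      have hφnn : 0 ≤ φ δ s := (hφc δ hδpos).2 s (hsub hmem)
      by_cases hzero : φ δ s = 0
      · simp [hzero]
      · have hsupp : s ∈ Set.Icc (t - δ) (t + δ) := by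
          by_contra hnot
          exact hzero (hφsupp δ hδpos s ⟨hsub hmem, hnot⟩)
        have hdist : |s - t| < δ0 := by
          have h1 : s - t ≤ δ := by linarith [hsupp.2]
          have h2 : t - s ≤ δ := by linarith [hsupp.1]
          have h3 : |s - t| ≤ δ := abs_sub_le_iff.mpr ⟨h1, h2⟩
          linarith
        have hW := hδ0 s hmem hsne hdist
        rw [hμs] at hW
        have habs : |(∫ x, Φ x ∂(μ s)) - ∫ x, Φ x ∂ν| ≤ (C : ℝ) * ε' :=
          W1_abs_le hMb hLip (hmassne s) hε'pos.le hW
        rw [← mul_sub, norm_mul, Real.norm_eq_abs, Real.norm_eq_abs, abs_of_nonneg hφnn]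
        exact mul_le_mul_of_nonneg_left habs hφnn
    calc ‖∫ s in Set.Icc a b, (φ δ s * (∫ x, Φ x ∂(μ s)) - φ δ s * ∫ x, Φ x ∂ν)‖
        ≤ ∫ s in Set.Icc a b, φ δ s * ((C : ℝ) * ε') :=
          norm_integral_le_of_norm_le (intφδ.mul_const _) hb
      _ = (∫ s in Set.Icc a b, φ δ s) * ((C : ℝ) * ε') := integral_mul_const _ _
      _ ≤ 1 * ((C : ℝ) * ε') :=
          mul_le_mul_of_nonneg_right (hint01 δ hδpos).2 (by positivity)
      _ < ε := by rw [one_mul]; exact hCε'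
  constructor
  · -- first limit
    intro L hL
    have hsub : Set.Icc (0 : ℝ) t ⊆ unitI := fun s hs => ⟨hs.1, hs.2.trans ht.2⟩
    have hcond : ∀ ε' : ℝ, 0 < ε' → ∃ δ0, 0 < δ0 ∧
        ∀ s, s ∈ Set.Icc (0 : ℝ) t → s ≠ t → |s - t| < δ0 →
          W1 (μbar s) L < ENNReal.ofReal ε' := by
      intro ε' hε'
      have h1 : ∀ᶠ s in 𝓝[<] t, W1 (μbar s) L < ENNReal.ofReal ε' :=
        hL.eventually_lt_const (ENNReal.ofReal_pos.mpr hε')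
      rw [eventually_nhdsWithin_iff, Metric.eventually_nhds_iff] at h1
      obtain ⟨δ0, hδ0pos, hδ0⟩ := h1
      refine ⟨δ0, hδ0pos, fun s hmem hsne hdist => ?_⟩
      exact hδ0 (by rw [Real.dist_eq]; exact hdist)
        (Set.mem_Iio.mpr (lt_of_le_of_ne hmem.2 hsne))
    have hint01 : ∀ δ : ℝ, 0 < δ →
        0 ≤ (∫ s in Set.Icc (0 : ℝ) t, φ δ s) ∧ (∫ s in Set.Icc (0 : ℝ) t, φ δ s) ≤ 1 :=
      fun δ hδ => ⟨(hφint δ hδ).1.1, (hφint δ hδ).1.2⟩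
    have hA := key 0 t L hsub hint01 hcond
    have hB : Tendsto (fun δ => (∫ s in Set.Icc (0 : ℝ) t, φ δ s) * ∫ x, Φ x ∂L)
        (𝓝[>] (0 : ℝ)) (𝓝 (θ * ∫ x, Φ x ∂L)) := hφlim.mul_const _
    have hAB := hA.add hB
    rw [zero_add] at hAB
    exact Filter.Tendsto.congr (fun δ => by ring) hAB
  · -- second limit
    have hsub : Set.Icc t 1 ⊆ unitI := fun s hs => ⟨le_trans ht.1 hs.1, hs.2⟩
    have hcond : ∀ ε' : ℝ, 0 < ε' → ∃ δ0, 0 < δ0 ∧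
        ∀ s, s ∈ Set.Icc t 1 → s ≠ t → |s - t| < δ0 →
          W1 (μbar s) (μbar t) < ENNReal.ofReal ε' := by
      intro ε' hε'
      rcases lt_or_eq_of_le ht.2 with h1 | h1
      · have h2 : ∀ᶠ s in 𝓝[>] t, W1M (μbar s) (μbar t) < ENNReal.ofReal ε' :=
          (hcad.1 t ⟨ht.1, h1⟩).eventually_lt_const (ENNReal.ofReal_pos.mpr hε')
        rw [eventually_nhdsWithin_iff, Metric.eventually_nhds_iff] at h2
        obtain ⟨δ0, hδ0pos, hδ0⟩ := h2
        refine ⟨δ0, hδ0pos, fun s hmem hsne hdist => ?_⟩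
        exact hδ0 (by rw [Real.dist_eq]; exact hdist)
          (Set.mem_Ioi.mpr (lt_of_le_of_ne hmem.1 (Ne.symm hsne)))
      · refine ⟨1, one_pos, fun s hmem hsne hdist => ?_⟩
        exfalso
        have hts : t < s := lt_of_le_of_ne hmem.1 (Ne.symm hsne)
        rw [h1] at hts
        exact absurd hmem.2 (not_le.mpr hts)
    have hint01 : ∀ δ : ℝ, 0 < δ →
        0 ≤ (∫ s in Set.Icc t 1, φ δ s) ∧ (∫ s in Set.Icc t 1, φ δ s) ≤ 1 := by
      intro δ hδ
      rw [(hφint δ hδ).2]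
      constructor
      · linarith [(hφint δ hδ).1.2]
      · linarith [(hφint δ hδ).1.1]
    have hA := key t 1 (μbar t) hsub hint01 hcond
    have hB : Tendsto (fun δ => (∫ s in Set.Icc t 1, φ δ s) * ∫ x, Φ x ∂(μbar t))
        (𝓝[>] (0 : ℝ)) (𝓝 ((1 - θ) * ∫ x, Φ x ∂(μbar t))) := by
      have h1 : Tendsto (fun δ => (1 - ∫ s in Set.Icc (0 : ℝ) t, φ δ s) * ∫ x, Φ x ∂(μbar t))
          (𝓝[>] (0 : ℝ)) (𝓝 ((1 - θ) * ∫ x, Φ x ∂(μbar t))) :=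
        (tendsto_const_nhds.sub hφlim).mul_const _
      refine h1.congr' ?_
      filter_upwards [self_mem_nhdsWithin] with δ hδ
      rw [(hφint δ hδ).2]
    have hAB := hA.add hB
    rw [zero_add] at hAB
    exact Filter.Tendsto.congr (fun δ => by ring) hAB

end
end
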